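/- For each A ⊆ [n] and s ∈ Z_{≥0}, the function f_{A,s}(M) = 1 if r_M(A) = s and 0 otherwise is a valuation under matroid subdivisions. Consequently the subset-rank function F(M) = Σ_{A⊆[n]} (A, r_M(A)), valued in the free abelian group on symbols (A,s), is a valuation. -/

import Mathlib

open Finset
open scoped Pointwise

/-- The indicator vector `e_B ∈ ℝⁿ` of a subset `B ⊆ [n]`. -/
def indVec (n : ℕ) (B : Finset (Fin n)) : Fin n → ℝ := fun i => if i ∈ B then 1 else 0

/-- A collection of subsets of `[n]` is the collection of bases of a matroid
(possibly the empty matroid) iff it satisfies the basis exchange axiom. -/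
def IsBases {n : ℕ} (𝓑 : Finset (Finset (Fin n))) : Prop :=
  ∀ B₁ ∈ 𝓑, ∀ B₂ ∈ 𝓑, ∀ b₁ ∈ B₁ \ B₂, ∃ b₂ ∈ B₂ \ B₁, insert b₂ (B₁.erase b₁) ∈ 𝓑

/-- The matroid (basis) polytope: convex hull of indicator vectors of the bases. -/
def polytope {n : ℕ} (𝓑 : Finset (Finset (Fin n))) : Set (Fin n → ℝ) :=
  convexHull ℝ (indVec n '' ↑𝓑)

/-- The rank of a subset `A` in the matroid with bases `𝓑`:
the maximal size of an intersection of `A` with a basis. -/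
def mrank {n : ℕ} (𝓑 : Finset (Finset (Fin n))) (A : Finset (Fin n)) : ℕ :=
  𝓑.sup fun B => (A ∩ B).card

/-- A subdivision of a polytope `P` into polytopes `Ps i`: their union is `P`,
their vertices are vertices of `P`, and each pairwise intersection is a proper
(exposed) face of both pieces. -/
def IsSubdivision {n m : ℕ} (P : Set (Fin n → ℝ)) (Ps : Fin m → Set (Fin n → ℝ)) : Prop :=
  (⋃ i, Ps i) = P ∧
  (∀ i, Set.extremePoints ℝ (Ps i) ⊆ Set.extremePoints ℝ P) ∧
  ∀ i j, i ≠ j →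
    IsExposed ℝ (Ps i) (Ps i ∩ Ps j) ∧ IsExposed ℝ (Ps j) (Ps i ∩ Ps j) ∧
    Ps i ∩ Ps j ≠ Ps i ∧ Ps i ∩ Ps j ≠ Ps j

/-- A matroid subdivision of the matroid `𝓑` into the matroids `𝓜 i`. -/
def IsMatroidSubdivision {n m : ℕ} (𝓑 : Finset (Finset (Fin n)))
    (𝓜 : Fin m → Finset (Finset (Fin n))) : Prop :=
  IsBases 𝓑 ∧ (∀ i, IsBases (𝓜 i)) ∧ IsSubdivision (polytope 𝓑) fun i => polytope (𝓜 i)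

open Classical in
/-- For `A ⊆ [m]`, the matroid `M_A` whose polytope is `⋂_{a ∈ A} Q(M_a)`:
its bases are the bases of `M` whose indicator vector lies in every `Q(M_a)`, `a ∈ A`.
For `A = ∅` this is `M` itself. -/
noncomputable def interMatroid {n m : ℕ} (𝓑 : Finset (Finset (Fin n)))
    (𝓜 : Fin m → Finset (Finset (Fin n))) (A : Finset (Fin m)) : Finset (Finset (Fin n)) :=
  𝓑.filter fun B => ∀ a ∈ A, indVec n B ∈ polytope (𝓜 a)

/-- `f` is a valuation under matroid subdivisions:
`∑_{A ⊆ [m]} (-1)^{|A|} f(M_A) = 0` for every matroid subdivision. -/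
def IsValuation {n : ℕ} {G : Type*} [AddCommGroup G] (f : Finset (Finset (Fin n)) → G) : Prop :=
  ∀ (m : ℕ) (𝓑 : Finset (Finset (Fin n))) (𝓜 : Fin m → Finset (Finset (Fin n))),
    IsMatroidSubdivision 𝓑 𝓜 →
    ∑ A : Finset (Fin m), (-1 : ℤ) ^ A.card • f (interMatroid 𝓑 𝓜 A) = 0

/-!
A matroid subdivision covers `Q(M)` by the pieces `Q(M_a)`, and `Q(M) ∩ ⋂_{a ∈ A} Q(M_a)` is
`Q(M_A)`: it is an exposed face of each of its pieces, so its vertices are vertices of `Q(M)`.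
The linear form `ℓ(x) = ∑_{i ∈ A₀} xᵢ` has maximum `r_M(A₀)` on `Q(M)`, so `r_{M_A}(A₀) ≥ s` iff
`Q(M_A)` meets the half-space `{ℓ ≥ s}`. At a point `x` of `Q(M) ∩ {ℓ ≥ s}`, the sets `A` with
`x ∈ Q(M_A)` are the subsets of the nonempty set of pieces containing `x`, so the alternating sum
of the indicators of the `Q(M_A) ∩ {ℓ ≥ s}` vanishes pointwise. The Euler characteristic of compact
convex sets is additive (slice, and reduce to intervals of `ℝ`), so the alternating count of the
nonempty ones vanishes too. Hence `[r(A₀) ≥ s]` is a valuation, and `[r(A₀) = s]` and `F` are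
integer combinations of such.
-/

open Filter Topology

open Classical in
/-- Additivity of the Euler characteristic `χ(K) = [K ≠ ∅]` of compact convex sets. -/
def IsEulerAdditive (E : Type*) [AddCommGroup E] [Module ℝ E] [TopologicalSpace E] : Prop :=
  ∀ (ι : Type) [Fintype ι] (c : ι → ℤ) (K : ι → Set E), (∀ i, Convex ℝ (K i)) →
    (∀ i, IsCompact (K i)) → (∀ x, ∑ i, (K i).indicator (fun _ => c i) x = 0) →
    ∑ i with (K i).Nonempty, c i = 0

theorem eventually_mem_Icc_iff_mem_Ico (a b t : ℝ) :
    ∀ᶠ u in 𝓝[>] t, (u ∈ Set.Icc a b ↔ t ∈ Set.Ico a b) := by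
  rcases lt_or_ge t a with hta | hat
  · filter_upwards [Ioo_mem_nhdsGT hta] with u hu
    simp only [Set.mem_Icc, Set.mem_Ico]
    constructor <;> intro h <;> linarith [hu.2, h.1]
  rcases lt_or_ge t b with htb | hbt
  · filter_upwards [Ioo_mem_nhdsGT htb] with u hu
    simp only [Set.mem_Icc, Set.mem_Ico]
    exact ⟨fun _ => ⟨hat, htb⟩, fun _ => ⟨hat.trans hu.1.le, hu.2.le⟩⟩
  · filter_upwards [self_mem_nhdsWithin] with u hu
    simp only [Set.mem_Icc, Set.mem_Ico, Set.mem_Ioi] at hu ⊢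
    constructor <;> intro h <;> linarith [h.2]

theorem isEulerAdditive_real : IsEulerAdditive ℝ := by
  intro ι _ c K hconv hcomp hsum
  classical
  -- Group the nonempty intervals `K i = [aᵢ, bᵢ]` by their right endpoint `bᵢ = t`. Just to the
  -- right of `t`, the indicator of `K i` is that of `[aᵢ, bᵢ)` at `t`, and the two indicators
  -- at `t` differ exactly by `[bᵢ = t]`.
  have hfiber : ∀ t, ∑ i with (K i).Nonempty ∧ sSup (K i) = t, c i = 0 := by
    intro t
    obtain ⟨u, hu⟩ := (eventually_all.2 fun i =>
      eventually_mem_Icc_iff_mem_Ico (sInf (K i)) (sSup (K i)) t).exists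
    calc ∑ i with (K i).Nonempty ∧ sSup (K i) = t, c i
        = ∑ i, ((K i).indicator (fun _ => c i) t - (K i).indicator (fun _ => c i) u) := by
          rw [Finset.sum_filter]
          refine Finset.sum_congr rfl fun i _ => ?_
          by_cases hne : (K i).Nonempty
          · have hmem : ∀ x, x ∈ K i ↔ x ∈ Set.Icc (sInf (K i)) (sSup (K i)) := fun x => by
              conv_lhs => rw [eq_Icc_of_connected_compact ((hconv i).isConnected hne) (hcomp i)]
            have hab : sInf (K i) ≤ sSup (K i) :=
              csInf_le_csSup hne (hcomp i).bddBelow (hcomp i).bddAbove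
            have hu' := hu i
            rw [← hmem, Set.mem_Ico] at hu'
            simp only [Set.indicator_apply, hu', hmem, Set.mem_Icc, hne, true_and]
            split_ifs <;> grind
          · rw [Set.not_nonempty_iff_eq_empty] at hne
            simp [hne]
      _ = 0 := by rw [Finset.sum_sub_distrib, hsum, hsum, sub_zero]
  rw [← Finset.sum_fiberwise_of_maps_to (g := fun i => sSup (K i))
    (t := (univ.filter fun i => (K i).Nonempty).image fun i => sSup (K i))
    fun i hi => mem_image_of_mem _ hi]
  refine Finset.sum_eq_zero fun t _ => ?_
  rw [Finset.filter_filter]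
  exact hfiber t

section EulerAdditive

variable {E F : Type*} [AddCommGroup E] [Module ℝ E] [TopologicalSpace E]
  [AddCommGroup F] [Module ℝ F] [TopologicalSpace F]

theorem isEulerAdditive_of_subsingleton [Subsingleton E] : IsEulerAdditive E := by
  intro ι _ c K _ _ hsum
  classical
  rw [← hsum 0, Finset.sum_filter]
  refine Finset.sum_congr rfl fun i _ => ?_
  have hne : (K i).Nonempty ↔ 0 ∈ K i :=
    ⟨fun ⟨x, hx⟩ => Subsingleton.elim x 0 ▸ hx, fun h => ⟨0, h⟩⟩
  simp only [Set.indicator_apply, hne]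

theorem IsEulerAdditive.congr (e : E ≃L[ℝ] F) (hE : IsEulerAdditive E) : IsEulerAdditive F := by
  intro ι _ c K hconv hcomp hsum
  have := hE ι c (fun i => e ⁻¹' K i) (fun i => (hconv i).linear_preimage e.toLinearMap)
    (fun i => e.toHomeomorph.isCompact_preimage.2 (hcomp i)) (fun x => hsum (e x))
  classical
  rwa [Finset.filter_congr fun i _ => e.surjective.nonempty_preimage] at this

/-- Fubini for the Euler characteristic: slice each set along the lines `ℝ × {y}`. -/
theorem IsEulerAdditive.real_prod [T2Space F] (hF : IsEulerAdditive F) :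
    IsEulerAdditive (ℝ × F) := by
  intro ι _ c K hconv hcomp hsum
  classical
  have hslice : ∀ y : F, ∑ i with {t : ℝ | (t, y) ∈ K i}.Nonempty, c i = 0 := by
    intro y
    refine isEulerAdditive_real ι c (fun i => {t | (t, y) ∈ K i}) (fun i => ?_) (fun i => ?_)
      fun t => hsum (t, y)
    · intro t₁ h₁ t₂ h₂ a b ha hb hab
      simpa [Prod.smul_mk, Prod.mk_add_mk, ← add_smul, hab] using hconv i h₁ h₂ ha hb hab
    · refine ((hcomp i).image continuous_fst).of_isClosed_subset
        ((hcomp i).isClosed.preimage (continuous_id.prodMk continuous_const)) fun t ht => ?_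
      exact ⟨(t, y), ht, rfl⟩
  have := hF ι c (fun i => Prod.snd '' K i)
    (fun i => (hconv i).linear_image (LinearMap.snd ℝ ℝ F))
    (fun i => (hcomp i).image continuous_snd) fun y => ?_
  · simpa only [Set.image_nonempty] using this
  · rw [← hslice y, Finset.sum_filter]
    refine Finset.sum_congr rfl fun i _ => ?_
    simp only [Set.indicator_apply, Set.mem_image, Prod.exists, exists_eq_right, Set.Nonempty]
    exact if_congr Iff.rfl rfl rfl

open Classical in
/-- The nerve of a convex cover has Euler characteristic `1`, the term `A = ∅` accounting for
the `-1`. -/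
theorem IsEulerAdditive.sum_neg_one_pow_card_eq_zero (hE : IsEulerAdditive E) {α : Type}
    [Fintype α] {P H : Set E} {Q : α → Set E} (hP : IsCompact P) (hPc : Convex ℝ P)
    (hH : IsClosed H) (hHc : Convex ℝ H) (hQ : ∀ a, IsClosed (Q a)) (hQc : ∀ a, Convex ℝ (Q a))
    (hcover : P ⊆ ⋃ a, Q a) :
    ∑ A : Finset α with (P ∩ (⋂ a ∈ A, Q a) ∩ H).Nonempty, (-1 : ℤ) ^ A.card = 0 := by
  refine hE (Finset α) _ (fun A => P ∩ (⋂ a ∈ A, Q a) ∩ H) (fun A => ?_) (fun A => ?_)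
    fun x => ?_
  · exact (hPc.inter (convex_iInter₂ fun a _ => hQc a)).inter hHc
  · exact (hP.inter_right (isClosed_biInter fun a _ => hQ a)).inter_right hH
  by_cases hx : x ∈ P ∩ H
  · obtain ⟨a, ha⟩ := Set.mem_iUnion.1 (hcover hx.1)
    have hmem : ∀ A : Finset α,
        x ∈ P ∩ (⋂ a ∈ A, Q a) ∩ H ↔ A ∈ (univ.filter (x ∈ Q ·)).powerset := by
      intro A
      simp [subset_iff, hx.1, hx.2]
    simp only [Set.indicator_apply, hmem, Finset.sum_ite_mem, univ_inter]
    exact sum_powerset_neg_one_pow_card_of_nonempty ⟨a, by simpa using ha⟩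
  · refine Finset.sum_eq_zero fun A _ => Set.indicator_of_notMem (fun hA => hx ?_) _
    exact ⟨hA.1.1, hA.2⟩

end EulerAdditive

theorem isEulerAdditive_pi : ∀ n, IsEulerAdditive (Fin n → ℝ)
  | 0 => isEulerAdditive_of_subsingleton
  | n + 1 => (isEulerAdditive_pi n).real_prod.congr (Fin.consEquivL ℝ fun _ => ℝ)

theorem subset_of_extremePoints_subset {E : Type*} [NormedAddCommGroup E] [NormedSpace ℝ E]
    {K L : Set E} (hK : IsCompact K) (hKc : Convex ℝ K) (hL : IsClosed L) (hLc : Convex ℝ L)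
    (h : K.extremePoints ℝ ⊆ L) : K ⊆ L := by
  rw [← closure_convexHull_extremePoints hK hKc]
  exact closure_minimal (convexHull_min h hLc) hL

namespace IsSubdivision

variable {n m : ℕ} {P : Set (Fin n → ℝ)} {Q : Fin m → Set (Fin n → ℝ)}

theorem subset (h : IsSubdivision P Q) (hP : IsClosed P) (hPc : Convex ℝ P)
    (hQ : ∀ a, IsCompact (Q a)) (hQc : ∀ a, Convex ℝ (Q a)) (a : Fin m) : Q a ⊆ P :=
  subset_of_extremePoints_subset (hQ a) (hQc a) hP hPc ((h.2.1 a).trans extremePoints_subset)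

/-- A nonempty intersection of pieces is an exposed face of each of them. -/
theorem extremePoints_inter_subset (h : IsSubdivision P Q) (hP : IsClosed P) (hPc : Convex ℝ P)
    (hQ : ∀ a, IsCompact (Q a)) (hQc : ∀ a, Convex ℝ (Q a)) (A : Finset (Fin m)) :
    (P ∩ ⋂ a ∈ A, Q a).extremePoints ℝ ⊆ P.extremePoints ℝ := by
  rcases A.eq_empty_or_nonempty with rfl | ⟨a₀, ha₀⟩
  · simp
  classical
  have hexp : IsExposed ℝ (Q a₀) (⋂₀ ↑(A.image fun a => Q a₀ ∩ Q a)) := by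
    refine IsExposed.sInter (Finset.image_nonempty.2 ⟨a₀, ha₀⟩) fun B hB => ?_
    obtain ⟨a, -, rfl⟩ := Finset.mem_image.1 hB
    rcases eq_or_ne a₀ a with rfl | hne
    · simpa only [Set.inter_self] using IsExposed.refl (𝕜 := ℝ) (Q a₀)
    · exact (h.2.2 a₀ a hne).1
  have hface : ⋂₀ ↑(A.image fun a => Q a₀ ∩ Q a) = P ∩ ⋂ a ∈ A, Q a := by
    ext x
    simp only [Finset.coe_image, Set.sInter_image, Set.mem_iInter, Set.mem_inter_iff,
      Finset.mem_coe]
    exact ⟨fun hx => ⟨h.subset hP hPc hQ hQc a₀ (hx a₀ ha₀).1, fun a ha => (hx a ha).2⟩,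
      fun hx a ha => ⟨hx.2 a₀ ha₀, hx.2 a ha⟩⟩
  rw [← hface]
  exact (hexp.isExtreme.extremePoints_subset_extremePoints).trans (h.2.1 a₀)

end IsSubdivision

section Polytope

variable {n m : ℕ}

theorem isCompact_polytope (𝓑 : Finset (Finset (Fin n))) : IsCompact (polytope 𝓑) :=
  (𝓑.finite_toSet.image _).isCompact_convexHull (𝕜 := ℝ)

theorem convex_polytope (𝓑 : Finset (Finset (Fin n))) : Convex ℝ (polytope 𝓑) :=
  convex_convexHull ℝ _

theorem indVec_mem_polytope {𝓑 : Finset (Finset (Fin n))} {B : Finset (Fin n)} (hB : B ∈ 𝓑) :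
    indVec n B ∈ polytope 𝓑 :=
  subset_convexHull ℝ _ ⟨B, hB, rfl⟩

theorem mem_interMatroid {𝓑 : Finset (Finset (Fin n))} {𝓜 : Fin m → Finset (Finset (Fin n))}
    {A : Finset (Fin m)} {B : Finset (Fin n)} :
    B ∈ interMatroid 𝓑 𝓜 A ↔ B ∈ 𝓑 ∧ ∀ a ∈ A, indVec n B ∈ polytope (𝓜 a) := by
  simp only [interMatroid, Finset.mem_filter]

theorem IsMatroidSubdivision.polytope_interMatroid {𝓑 : Finset (Finset (Fin n))}
    {𝓜 : Fin m → Finset (Finset (Fin n))} (h : IsMatroidSubdivision 𝓑 𝓜) (A : Finset (Fin m)) :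
    polytope (interMatroid 𝓑 𝓜 A) = polytope 𝓑 ∩ ⋂ a ∈ A, polytope (𝓜 a) := by
  have hconv : Convex ℝ (polytope 𝓑 ∩ ⋂ a ∈ A, polytope (𝓜 a)) :=
    (convex_polytope 𝓑).inter (convex_iInter₂ fun a _ => convex_polytope (𝓜 a))
  have hcomp : IsCompact (polytope 𝓑 ∩ ⋂ a ∈ A, polytope (𝓜 a)) :=
    (isCompact_polytope 𝓑).inter_right <|
      isClosed_biInter fun a _ => (isCompact_polytope _).isClosed
  refine subset_antisymm (convexHull_min ?_ hconv) ?_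
  · rintro _ ⟨B, hB, rfl⟩
    obtain ⟨hB𝓑, hBA⟩ := mem_interMatroid.1 hB
    exact ⟨indVec_mem_polytope hB𝓑, Set.mem_iInter₂.2 hBA⟩
  refine subset_of_extremePoints_subset hcomp hconv (isCompact_polytope _).isClosed
    (convex_polytope _) fun x hx => ?_
  have hxP := h.2.2.extremePoints_inter_subset (isCompact_polytope 𝓑).isClosed
    (convex_polytope 𝓑) (fun a => isCompact_polytope _) (fun a => convex_polytope _) A hx
  obtain ⟨B, hB, rfl⟩ := extremePoints_convexHull_subset hxP
  exact indVec_mem_polytope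
    (mem_interMatroid.2 ⟨hB, Set.mem_iInter₂.1 (extremePoints_subset hx).2⟩)

theorem mrank_le_card (𝓑 : Finset (Finset (Fin n))) (A : Finset (Fin n)) :
    mrank 𝓑 A ≤ A.card :=
  Finset.sup_le fun _ _ => Finset.card_le_card Finset.inter_subset_left

def coordSum (A : Finset (Fin n)) : StrongDual ℝ (Fin n → ℝ) :=
  ∑ i ∈ A, ContinuousLinearMap.proj i

theorem coordSum_indVec (A B : Finset (Fin n)) : coordSum A (indVec n B) = (A ∩ B).card := by
  simp [coordSum, indVec]

theorem polytope_inter_coordSum_nonempty_iff (𝓑 : Finset (Finset (Fin n))) (A : Finset (Fin n))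
    (s : ℕ) :
    (polytope 𝓑 ∩ {x | (s : ℝ) ≤ coordSum A x}).Nonempty ↔ 𝓑.Nonempty ∧ s ≤ mrank 𝓑 A := by
  constructor
  · rintro ⟨x, hxP, hxs⟩
    have hle : polytope 𝓑 ⊆ {x | coordSum A x ≤ mrank 𝓑 A} := by
      refine convexHull_min ?_ (convex_halfSpace_le (coordSum A).isLinear _)
      rintro _ ⟨B, hB, rfl⟩
      have hB' : (A ∩ B).card ≤ mrank 𝓑 A := Finset.le_sup (f := fun B => (A ∩ B).card) hB
      simpa [coordSum_indVec] using hB'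
    have h𝓑 : (polytope 𝓑).Nonempty := ⟨x, hxP⟩
    rw [polytope, convexHull_nonempty_iff, Set.image_nonempty, Finset.coe_nonempty] at h𝓑
    exact ⟨h𝓑, by exact_mod_cast hxs.out.trans (hle hxP)⟩
  · rintro ⟨h𝓑, hs⟩
    obtain ⟨B, hB, hBA⟩ := Finset.exists_mem_eq_sup 𝓑 h𝓑 fun B => (A ∩ B).card
    refine ⟨indVec n B, indVec_mem_polytope hB, ?_⟩
    rw [mrank, hBA] at hs
    simpa [coordSum_indVec] using hs

end Polytope

namespace IsValuation

variable {n : ℕ} {G : Type*} [AddCommGroup G]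

theorem sub {f g : Finset (Finset (Fin n)) → G} (hf : IsValuation f) (hg : IsValuation g) :
    IsValuation fun 𝓑 => f 𝓑 - g 𝓑 := by
  intro m 𝓑 𝓜 h
  simp only [smul_sub, Finset.sum_sub_distrib, hf m 𝓑 𝓜 h, hg m 𝓑 𝓜 h, sub_zero]

theorem sum {ι : Type*} (t : Finset ι) {f : ι → Finset (Finset (Fin n)) → G}
    (hf : ∀ j ∈ t, IsValuation (f j)) : IsValuation fun 𝓑 => ∑ j ∈ t, f j 𝓑 := by
  intro m 𝓑 𝓜 h
  simp only [Finset.smul_sum]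
  rw [Finset.sum_comm]
  exact Finset.sum_eq_zero fun j hj => hf j hj m 𝓑 𝓜 h

theorem smul_const {f : Finset (Finset (Fin n)) → ℤ} (hf : IsValuation f) (v : G) :
    IsValuation fun 𝓑 => f 𝓑 • v := by
  intro m 𝓑 𝓜 h
  simp only [smul_smul, ← Finset.sum_smul, ← smul_eq_mul, hf m 𝓑 𝓜 h, zero_smul]

end IsValuation

open Classical in
theorem isValuation_le_mrank {n : ℕ} (A₀ : Finset (Fin n)) (s : ℕ) :
    IsValuation fun 𝓑 : Finset (Finset (Fin n)) =>
      if 𝓑.Nonempty ∧ s ≤ mrank 𝓑 A₀ then (1 : ℤ) else 0 := by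
  intro m 𝓑 𝓜 h
  have hnerve := (isEulerAdditive_pi n).sum_neg_one_pow_card_eq_zero (isCompact_polytope 𝓑)
    (convex_polytope 𝓑) (isClosed_le continuous_const (coordSum A₀).continuous)
    (convex_halfSpace_ge (coordSum A₀).isLinear (s : ℝ))
    (fun a => (isCompact_polytope _).isClosed) (fun a => convex_polytope _) h.2.2.1.superset
  simp only [← h.polytope_interMatroid, polytope_inter_coordSum_nonempty_iff] at hnerve
  simpa [Finset.sum_filter] using hnerve

open Classical in
/-- For each `A ⊆ [n]`, `s ∈ ℤ_{≥0}`, the indicator `f_{A,s}(M) = [r_M(A) = s]`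
(with value `0` on the empty matroid) is a valuation; consequently the subset-rank
function `F(M) = ∑_{A ⊆ [n]} (A, r_M(A))`, valued in the free abelian group on
symbols `(A, s)`, is a valuation. -/
theorem statement_13 (n : ℕ) :
    (∀ (A : Finset (Fin n)) (s : ℕ),
      IsValuation fun 𝓑 : Finset (Finset (Fin n)) =>
        if 𝓑.Nonempty ∧ mrank 𝓑 A = s then (1 : ℤ) else 0) ∧
    IsValuation fun 𝓑 : Finset (Finset (Fin n)) =>
      if 𝓑 = ∅ then 0 else
        ∑ A : Finset (Fin n),
          FreeAbelianGroup.of ((A, mrank 𝓑 A) : Finset (Fin n) × ℕ) := by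
  have hrank (A : Finset (Fin n)) (s : ℕ) : IsValuation fun 𝓑 : Finset (Finset (Fin n)) =>
      if 𝓑.Nonempty ∧ mrank 𝓑 A = s then (1 : ℤ) else 0 := by
    convert (isValuation_le_mrank A s).sub (isValuation_le_mrank A (s + 1)) using 2 with 𝓑
    split_ifs <;> grind
  refine ⟨hrank, ?_⟩
  have hF : (fun 𝓑 : Finset (Finset (Fin n)) => if 𝓑 = ∅ then 0 else
      ∑ A : Finset (Fin n), FreeAbelianGroup.of ((A, mrank 𝓑 A) : Finset (Fin n) × ℕ)) =
      fun 𝓑 => ∑ A : Finset (Fin n), ∑ s ∈ range (n + 1),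
        (if 𝓑.Nonempty ∧ mrank 𝓑 A = s then (1 : ℤ) else 0) • FreeAbelianGroup.of (A, s) := by
    funext 𝓑
    rcases 𝓑.eq_empty_or_nonempty with rfl | h𝓑
    · simp
    have hlt (A : Finset (Fin n)) : mrank 𝓑 A < n + 1 := Nat.lt_succ_of_le <|
      (mrank_le_card 𝓑 A).trans <| (card_le_univ A).trans_eq (Fintype.card_fin n)
    simp [h𝓑.ne_empty, h𝓑, ite_smul, hlt]
  rw [hF]
  exact IsValuation.sum _ fun A _ => IsValuation.sum _ fun s _ => (hrank A s).smul_const _
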